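/- arXiv:1711.04177 — 3 statements merged into one kernel-verified Lean document; each statement's English description precedes it below -/
import Mathlib

section
/- Let (G,Γ) be a surjective almost semisimple graph structure of growth λ > 1 which has exactly one non-trivial strongly connected component (non-trivial meaning it contains a directed closed path of positive length). Then (G,Γ) is thick: for every maximal vertex v there exists a finite subset B ⊆ G with G = B·Γ_v·B. -/
open Filter Set

/-! ## Hyperbolic geometry preliminaries -/

/-- The Gromov product `(y,z)ₓ`. -/
noncomputable def gromovProd {X : Type*} [MetricSpace X] (x y z : X) : ℝ :=
  (dist x y + dist x z - dist y z) / 2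

/-- A metric space is geodesic if any two points are joined by a geodesic segment. -/
def IsGeodesicSpace (X : Type*) [MetricSpace X] : Prop :=
  ∀ x y : X, ∃ f : ℝ → X, f 0 = x ∧ f (dist x y) = y ∧
    ∀ s ∈ Set.Icc (0:ℝ) (dist x y), ∀ t ∈ Set.Icc (0:ℝ) (dist x y),
      dist (f s) (f t) = |s - t|

/-- δ-hyperbolicity via the four-point condition on Gromov products. -/
def IsDeltaHyperbolic (X : Type*) [MetricSpace X] (δ : ℝ) : Prop :=
  ∀ x y z w : X, min (gromovProd x y w) (gromovProd x w z) - δ ≤ gromovProd x y z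

section Action

variable {G X : Type*} [Group G] [MetricSpace X] [MulAction G X]

/-- The action of `G` on `X` is by isometries. -/
def IsIsometricAction (G X : Type*) [Group G] [MetricSpace X] [MulAction G X] : Prop :=
  ∀ (g : G) (x y : X), dist (g • x) (g • y) = dist x y

/-- Translation length `τ(g) = lim dist (gⁿ x) x / n` (as a `limsup`, which coincides with
the limit for isometric actions, and is independent of the basepoint). -/
noncomputable def transLen (g : G) (x : X) : ℝ :=
  Filter.limsup (fun n : ℕ => dist ((g ^ n) • x) x / n) Filter.atTop

/-- `g` is loxodromic if its translation length is positive. -/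
def IsLoxodromic (g : G) (x : X) : Prop := 0 < transLen g x

/-- Two independent loxodromic elements. -/
def IndepLox (x : X) (g h : G) : Prop :=
  IsLoxodromic g x ∧ IsLoxodromic h x ∧
    ∃ M : ℝ, ∀ n m : ℤ, n ≠ 0 → m ≠ 0 →
      gromovProd x ((g ^ n) • x) ((h ^ m) • x) ≤ M

/-- A subset of `G` is nonelementary if it contains two independent loxodromics. -/
def NonelemSubset (x : X) (A : Set G) : Prop :=
  ∃ g ∈ A, ∃ h ∈ A, IndepLox x g h

end Action

/-! ## Graph structures -/

/-- A graph structure on a group `G`: a finite directed multigraph with edges labeled by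
elements of `G`, an initial vertex from which every vertex is reachable, and distinct labels
on edges leaving a common vertex. -/
structure GraphStruct (G : Type*) where
  V : Type
  E : Type
  fintV : Fintype V
  fintE : Fintype E
  decV : DecidableEq V
  src : E → V
  tgt : E → V
  label : E → G
  init : V
  label_inj : ∀ e e' : E, src e = src e' → label e = label e' → e = e'
  reach : ∀ v : V, v = init ∨ ∃ es : List E, es ≠ [] ∧
      List.Chain' (fun e e' => tgt e = src e') es ∧
      (∀ e ∈ es.head?, src e = init) ∧ (∀ e ∈ es.getLast?, tgt e = v)

attribute [instance] GraphStruct.fintV GraphStruct.fintE GraphStruct.decV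

/-- Word length at most `c` with respect to the symmetrized alphabet `S ∪ S⁻¹`. -/
def HasWordLenLE {G : Type*} [Group G] (S : Set G) (g : G) (c : ℝ) : Prop :=
  ∃ l : List G, (∀ s ∈ l, s ∈ S ∪ S⁻¹) ∧ (l.length : ℝ) ≤ c ∧ l.prod = g

namespace GraphStruct

variable {G : Type*} [Group G] (Γ : GraphStruct G)

/-- The edges of a list form a directed path (consecutive edges are incident). -/
def IsChain (es : List Γ.E) : Prop :=
  List.Chain' (fun e e' => Γ.tgt e = Γ.src e') es

/-- A directed path starting at the vertex `v`. -/
def IsPathFrom (v : Γ.V) (es : List Γ.E) : Prop :=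
  Γ.IsChain es ∧ ∀ e ∈ es.head?, Γ.src e = v

/-- The path ends at the vertex `v`. -/
def EndsAt (es : List Γ.E) (v : Γ.V) : Prop :=
  ∀ e ∈ es.getLast?, Γ.tgt e = v

/-- Evaluation of a path: the ordered product of its edge labels. -/
def ev (es : List Γ.E) : G := (es.map Γ.label).prod

/-- The set of finite directed paths starting at the initial vertex. -/
def Omega0 : Set (List Γ.E) := {es | Γ.IsPathFrom Γ.init es}

/-- The paths of length `n` starting at the initial vertex. -/
def Sn (n : ℕ) : Set (List Γ.E) := {es | es ∈ Γ.Omega0 ∧ es.length = n}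

/-- The counting measure `Pⁿ(A) = #(Sₙ ∩ A) / #Sₙ`. -/
noncomputable def Pn (n : ℕ) (A : Set (List Γ.E)) : ℝ :=
  ((Γ.Sn n ∩ A).ncard : ℝ) / ((Γ.Sn n).ncard : ℝ)

/-- `w` is accessible from `v` by a directed path. -/
def Accessible (v w : Γ.V) : Prop :=
  v = w ∨ ∃ es : List Γ.E, es ≠ [] ∧ Γ.IsPathFrom v es ∧ Γ.EndsAt es w

/-- Mutual accessibility (same strongly connected component). -/
def MutAcc (v w : Γ.V) : Prop := Γ.Accessible v w ∧ Γ.Accessible w v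

/-- Paths of length `n` from `v` staying in the strongly connected component of `v`. -/
def compPaths (v : Γ.V) (n : ℕ) : Set (List Γ.E) :=
  {es | es.length = n ∧ Γ.IsPathFrom v es ∧
    ∀ e ∈ es, Γ.MutAcc v (Γ.src e) ∧ Γ.MutAcc v (Γ.tgt e)}

/-- The adjacency matrix of the graph, as a complex matrix. -/
noncomputable def adjMatrix : Matrix Γ.V Γ.V ℂ :=
  fun v w => (Nat.card {e : Γ.E // Γ.src e = v ∧ Γ.tgt e = w} : ℂ)

/-- The graph structure is almost semisimple of growth `lam > 1`: `lam` is the maximal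
modulus of eigenvalues of the adjacency matrix, and every eigenvalue of modulus `lam` has
equal algebraic and geometric multiplicities. -/
def AlmostSemisimple (lam : ℝ) : Prop :=
  1 < lam ∧ (∃ μ ∈ spectrum ℂ Γ.adjMatrix, ‖μ‖ = lam) ∧
    (∀ μ ∈ spectrum ℂ Γ.adjMatrix, ‖μ‖ ≤ lam) ∧
    ∀ μ ∈ spectrum ℂ Γ.adjMatrix, ‖μ‖ = lam →
      (Γ.adjMatrix.charpoly).rootMultiplicity μ =
        Module.finrank ℂ (Module.End.eigenspace (Matrix.toLin' Γ.adjMatrix) μ)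

/-- A vertex is maximal if the number of paths of length `n` from `v` staying in the
component of `v` grows like `lam ^ n`. -/
def MaximalVertex (lam : ℝ) (v : Γ.V) : Prop :=
  Filter.limsup (fun n : ℕ => ((Γ.compPaths v n).ncard : ℝ) ^ ((n : ℝ)⁻¹)) Filter.atTop = lam

/-- The loop semigroup of `v`: evaluations of directed loops based at `v`. -/
def loopSemigroup (v : Γ.V) : Set G :=
  {g | ∃ es : List Γ.E, es ≠ [] ∧ Γ.IsPathFrom v es ∧ Γ.EndsAt es v ∧ Γ.ev es = g}

/-- Thickness relative to a subgroup `H`: `H ⊆ B·Γ_v·B` for a finite set `B`,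
for every maximal vertex `v`. -/
def ThickRel (lam : ℝ) (H : Subgroup G) : Prop :=
  ∀ v : Γ.V, Γ.MaximalVertex lam v → ∃ B : Finset G,
    ∀ h ∈ H, ∃ b₁ ∈ B, ∃ l ∈ Γ.loopSemigroup v, ∃ b₂ ∈ B, h = b₁ * l * b₂

/-- Thickness: `G = B·Γ_v·B` for a finite set `B`, for every maximal vertex `v`. -/
def Thick (lam : ℝ) : Prop :=
  ∀ v : Γ.V, Γ.MaximalVertex lam v → ∃ B : Finset G,
    ∀ g : G, ∃ b₁ ∈ B, ∃ l ∈ Γ.loopSemigroup v, ∃ b₂ ∈ B, g = b₁ * l * b₂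

/-- The set of edge labels of the graph. -/
def labelSet : Set G := Set.range Γ.label

/-- A path `γ` `c`-almost contains `w` if it has a consecutive subpath `p` with
`w = a · ev(p) · b` where `|a|, |b| ≤ c`. -/
def AlmostContains (c : ℝ) (w : G) (γ : List Γ.E) : Prop :=
  ∃ pre p suf : List Γ.E, γ = pre ++ p ++ suf ∧
    ∃ a b : G, HasWordLenLE Γ.labelSet a c ∧ HasWordLenLE Γ.labelSet b c ∧
      w = a * Γ.ev p * b

/-- The set of paths from the initial vertex that do not `c`-almost contain `w`. -/
def Ywc (w : G) (c : ℝ) : Set (List Γ.E) :=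
  {γ | γ ∈ Γ.Omega0 ∧ ¬ Γ.AlmostContains c w γ}

/-- Growth quasitightness relative to a subgroup `H`. -/
def GrowthQuasitightRel (H : Subgroup G) : Prop :=
  ∃ c : ℝ, 0 < c ∧ ∀ w ∈ H,
    Filter.Tendsto (fun n => Γ.Pn n (Γ.Ywc w c)) Filter.atTop (nhds 0)

/-- The graph structure is nonelementary for the action on `X`: the loop semigroup of every
maximal vertex contains two independent loxodromics. -/
def NonelemStructure {X : Type*} [MetricSpace X] [MulAction G X]
    (lam : ℝ) (x : X) : Prop :=
  ∀ v : Γ.V, Γ.MaximalVertex lam v → NonelemSubset x (Γ.loopSemigroup v)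

/-- There is a nonempty directed loop based at `v`. -/
def HasLoopAt (v : Γ.V) : Prop :=
  ∃ es : List Γ.E, es ≠ [] ∧ Γ.IsPathFrom v es ∧ Γ.EndsAt es v

end GraphStruct

/-- Word length of `g` with respect to the alphabet `S`. -/
noncomputable def wordLength {G : Type*} [Monoid G] (S : Set G) (g : G) : ℕ :=
  sInf {k | ∃ l : List G, l.length = k ∧ (∀ s ∈ l, s ∈ S) ∧ l.prod = g}

/-- A geodesic combing of `G` with respect to `S`: a graph structure with labels in `S` whose
evaluation map is a bijection from `Ω₀` to `G`, each path evaluating to an element of word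
length equal to the length of the path. -/
def GraphStruct.IsGeodesicCombing {G : Type*} [Group G] (Γ : GraphStruct G) (S : Set G) :
    Prop :=
  Set.range Γ.label ⊆ S ∧ Set.BijOn Γ.ev Γ.Omega0 Set.univ ∧
    ∀ p ∈ Γ.Omega0, wordLength S (Γ.ev p) = p.length



/-!
A maximal vertex `v` carries a loop: otherwise no path of positive length stays in its component,
and its growth would be `0`. Every vertex with a loop lies in the component `C` of `v`, so
cutting a path from the initial vertex at the first and at the last edge leaving from `C` yields
a head and a tail (after its first edge) without loops, hence of length at most `|V|`, and a
middle part between two vertices of `C`, which fixed walks to and from `v` close up to a loop.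
-/

namespace List

variable {α : Type*} {p : α → Prop}

theorem exists_split_at_first {l : List α} (h : ∃ x ∈ l, p x) :
    ∃ a x b, l = a ++ x :: b ∧ p x ∧ ∀ y ∈ a, ¬p y := by
  classical
  obtain ⟨x, hx⟩ := Option.isSome_iff_exists.1
    (List.find?_isSome (p := fun x => decide (p x)).2 (by simpa using h))
  obtain ⟨hpx, a, b, rfl, ha⟩ := List.find?_eq_some_iff_append.1 hx
  exact ⟨a, x, b, rfl, by simpa using hpx, fun y hy => by simpa using ha y hy⟩

theorem exists_split_at_last {l : List α} (h : ∃ x ∈ l, p x) :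
    ∃ a x b, l = a ++ x :: b ∧ p x ∧ ∀ y ∈ b, ¬p y := by
  obtain ⟨a, x, b, hl, hpx, ha⟩ := exists_split_at_first (l := l.reverse) (by simpa using h)
  refine ⟨b.reverse, x, a.reverse, ?_, hpx, fun y hy => ha y (List.mem_reverse.1 hy)⟩
  simpa using congrArg List.reverse hl

end List

namespace GraphStruct

variable {G : Type*} (Γ : GraphStruct G)

/-- Unlike `IsPathFrom u p ∧ EndsAt p w`, this forces `u = w` for the empty list `p`. -/
inductive IsWalk : Γ.V → Γ.V → List Γ.E → Prop
  | nil (u : Γ.V) : IsWalk u u []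
  | cons {e : Γ.E} {w : Γ.V} {p : List Γ.E} : IsWalk (Γ.tgt e) w p → IsWalk (Γ.src e) w (e :: p)

variable {Γ}

theorem isWalk_cons_iff {u w : Γ.V} {e : Γ.E} {p : List Γ.E} :
    Γ.IsWalk u w (e :: p) ↔ Γ.src e = u ∧ Γ.IsWalk (Γ.tgt e) w p := by
  constructor
  · rintro ⟨⟩
    exact ⟨rfl, ‹_›⟩
  · rintro ⟨rfl, hp⟩
    exact hp.cons

theorem isWalk_nil_iff {u w : Γ.V} : Γ.IsWalk u w [] ↔ u = w := by
  constructor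
  · rintro ⟨⟩
    rfl
  · rintro rfl
    exact .nil u

theorem IsWalk.append {u w x : Γ.V} {p q : List Γ.E} (hp : Γ.IsWalk u w p)
    (hq : Γ.IsWalk w x q) : Γ.IsWalk u x (p ++ q) := by
  induction hp with
  | nil => exact hq
  | cons _ ih => exact (ih hq).cons

theorem IsWalk.of_append {u x : Γ.V} {p q : List Γ.E} (h : Γ.IsWalk u x (p ++ q)) :
    ∃ w, Γ.IsWalk u w p ∧ Γ.IsWalk w x q := by
  induction p generalizing u with
  | nil => exact ⟨u, .nil u, h⟩
  | cons e p ih =>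
    rw [List.cons_append] at h
    obtain ⟨rfl, htail⟩ := isWalk_cons_iff.1 h
    obtain ⟨w, hp, hq⟩ := ih htail
    exact ⟨w, hp.cons, hq⟩

theorem IsWalk.endsAt {u w : Γ.V} {p : List Γ.E} (h : Γ.IsWalk u w p) : Γ.EndsAt p w := by
  induction h with
  | nil => simp [EndsAt]
  | @cons e w p hp ih =>
    rcases p with _ | ⟨e', p⟩
    · simp [EndsAt, isWalk_nil_iff.1 hp]
    · simpa [EndsAt] using ih

theorem isPathFrom_cons {u : Γ.V} {e : Γ.E} {p : List Γ.E} :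
    Γ.IsPathFrom u (e :: p) ↔ Γ.src e = u ∧ Γ.IsPathFrom (Γ.tgt e) p := by
  have hchain : Γ.IsChain (e :: p) ↔ (∀ e' ∈ p.head?, Γ.tgt e = Γ.src e') ∧ Γ.IsChain p :=
    List.isChain_cons
  simp only [IsPathFrom, hchain, List.head?_cons, Option.mem_some_iff, forall_eq']
  grind

theorem isPathFrom_iff_exists_isWalk {u : Γ.V} {p : List Γ.E} :
    Γ.IsPathFrom u p ↔ ∃ w, Γ.IsWalk u w p := by
  induction p generalizing u with
  | nil => exact ⟨fun _ => ⟨u, .nil u⟩, fun _ => ⟨List.isChain_nil, by simp⟩⟩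
  | cons e p ih =>
    simp only [isPathFrom_cons, isWalk_cons_iff, ih]
    tauto

theorem IsWalk.of_isPathFrom {u w : Γ.V} {p : List Γ.E} (hp : Γ.IsPathFrom u p) (hne : p ≠ [])
    (hpw : Γ.EndsAt p w) : Γ.IsWalk u w p := by
  obtain ⟨x, hx⟩ := isPathFrom_iff_exists_isWalk.1 hp
  have hlast := List.getLast?_eq_some_getLast hne
  exact (hx.endsAt _ hlast).symm.trans (hpw _ hlast) ▸ hx

theorem accessible_iff {u w : Γ.V} : Γ.Accessible u w ↔ ∃ p, Γ.IsWalk u w p := by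
  constructor
  · rintro (rfl | ⟨p, hne, hp, hpw⟩)
    · exact ⟨[], .nil u⟩
    · exact ⟨p, .of_isPathFrom hp hne hpw⟩
  · rintro ⟨p, hp⟩
    rcases eq_or_ne p [] with rfl | hne
    · exact Or.inl (isWalk_nil_iff.1 hp)
    · exact Or.inr ⟨p, hne, isPathFrom_iff_exists_isWalk.2 ⟨w, hp⟩, hp.endsAt⟩

theorem hasLoopAt_iff {v : Γ.V} : Γ.HasLoopAt v ↔ ∃ p ≠ [], Γ.IsWalk v v p := by
  constructor
  · rintro ⟨p, hne, hp, hpv⟩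
    exact ⟨p, hne, .of_isPathFrom hp hne hpv⟩
  · rintro ⟨p, hne, hp⟩
    exact ⟨p, hne, isPathFrom_iff_exists_isWalk.2 ⟨v, hp⟩, hp.endsAt⟩

theorem mutAcc_equivalence : Equivalence Γ.MutAcc := by
  have trans {u w x : Γ.V} (h₁ : Γ.Accessible u w) (h₂ : Γ.Accessible w x) :
      Γ.Accessible u x := by
    obtain ⟨p, hp⟩ := accessible_iff.1 h₁
    obtain ⟨q, hq⟩ := accessible_iff.1 h₂
    exact accessible_iff.2 ⟨p ++ q, hp.append hq⟩
  exact ⟨fun _ => ⟨Or.inl rfl, Or.inl rfl⟩, fun h => ⟨h.2, h.1⟩,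
    fun h₁ h₂ => ⟨trans h₁.1 h₂.1, trans h₂.2 h₁.2⟩⟩

/-- A repeated source vertex would cut out a loop based at it. -/
theorem IsWalk.nodup_map_src {u w : Γ.V} {p : List Γ.E} (hp : Γ.IsWalk u w p)
    (h : ∀ e ∈ p, ¬Γ.HasLoopAt (Γ.src e)) : (p.map Γ.src).Nodup := by
  induction hp with
  | nil => exact List.nodup_nil
  | @cons e w p hp ih =>
    refine List.nodup_cons.2 ⟨fun hmem => ?_, ih fun e' he' => h e' (List.mem_cons_of_mem _ he')⟩
    obtain ⟨e', he', hsrc⟩ := List.mem_map.1 hmem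
    obtain ⟨a, b, rfl⟩ := List.append_of_mem he'
    obtain ⟨x, ha, hb⟩ := hp.of_append
    obtain ⟨rfl, -⟩ := isWalk_cons_iff.1 hb
    exact h e List.mem_cons_self (hasLoopAt_iff.2 ⟨_, List.cons_ne_nil _ _, hsrc ▸ ha.cons⟩)

theorem IsWalk.length_le_card {u w : Γ.V} {p : List Γ.E} (hp : Γ.IsWalk u w p)
    (h : ∀ e ∈ p, ¬Γ.HasLoopAt (Γ.src e)) : p.length ≤ Fintype.card Γ.V := by
  simpa using (hp.nodup_map_src h).length_le_card

theorem IsWalk.exists_eq_append_append {C : Set Γ.V} (hC : ∀ w, Γ.HasLoopAt w → w ∈ C)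
    (hne : C.Nonempty) {u z : Γ.V} {γ : List Γ.E} (hγ : Γ.IsWalk u z γ) :
    ∃ pre mid suf w₁ w₂, γ = pre ++ mid ++ suf ∧ pre.length ≤ Fintype.card Γ.V ∧
      suf.length ≤ Fintype.card Γ.V + 1 ∧ w₁ ∈ C ∧ w₂ ∈ C ∧ Γ.IsWalk w₁ w₂ mid := by
  by_cases hex : ∃ e ∈ γ, Γ.src e ∈ C
  · obtain ⟨pre, e₁, rest, rfl, he₁, hpre⟩ := List.exists_split_at_first hex
    obtain ⟨mid, e₂, suf, hsplit, he₂, hsuf⟩ :=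
      List.exists_split_at_last (p := fun e => Γ.src e ∈ C) ⟨e₁, List.mem_cons_self, he₁⟩
    obtain ⟨x, hpre_walk, hrest⟩ := hγ.of_append
    obtain ⟨rfl, -⟩ := isWalk_cons_iff.1 hrest
    rw [hsplit] at hrest
    obtain ⟨y, hmid, hsuf_walk⟩ := hrest.of_append
    obtain ⟨rfl, hsuf_tail⟩ := isWalk_cons_iff.1 hsuf_walk
    refine ⟨pre, mid, e₂ :: suf, _, _, by rw [hsplit, List.append_assoc], ?_, ?_, he₁, he₂, hmid⟩
    · exact hpre_walk.length_le_card fun e he hloop => hpre e he (hC _ hloop)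
    · simpa using hsuf_tail.length_le_card fun e he hloop => hsuf e he (hC _ hloop)
  · push Not at hex
    obtain ⟨w, hw⟩ := hne
    exact ⟨γ, [], [], w, w, by simp, hγ.length_le_card fun e he hloop => hex e he (hC _ hloop),
      by simp, hw, hw, .nil w⟩

theorem compPaths_eq_empty {v : Γ.V} (hv : ¬Γ.HasLoopAt v) {n : ℕ} (hn : n ≠ 0) :
    Γ.compPaths v n = ∅ := by
  refine Set.eq_empty_of_forall_notMem ?_
  rintro (_ | ⟨e, es⟩) ⟨hlen, hpath, hmem⟩
  · exact hn hlen.symm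
  · obtain ⟨p, hp⟩ := accessible_iff.1 (hmem e List.mem_cons_self).2.2
    exact hv (hasLoopAt_iff.2 ⟨e :: p, List.cons_ne_nil e p, hpath.2 e rfl ▸ hp.cons⟩)

theorem hasLoopAt_of_maximalVertex {lam : ℝ} (hlam : lam ≠ 0) {v : Γ.V}
    (hv : Γ.MaximalVertex lam v) : Γ.HasLoopAt v := by
  by_contra hloop
  refine hlam ?_
  calc lam = limsup (fun n : ℕ => ((Γ.compPaths v n).ncard : ℝ) ^ ((n : ℝ)⁻¹)) atTop := hv.symm
    _ = limsup (fun _ : ℕ => (0 : ℝ)) atTop := by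
      refine limsup_congr ((eventually_ne_atTop 0).mono fun n hn => ?_)
      simp [compPaths_eq_empty hloop hn, hn]
    _ = 0 := limsup_const 0

section Group

variable [Group G]

theorem ev_append (p q : List Γ.E) : Γ.ev (p ++ q) = Γ.ev p * Γ.ev q := by
  simp [ev]

theorem ev_mem_loopSemigroup {v : Γ.V} {p : List Γ.E} (hne : p ≠ []) (hp : Γ.IsWalk v v p) :
    Γ.ev p ∈ Γ.loopSemigroup v :=
  ⟨p, hne, isPathFrom_iff_exists_isWalk.2 ⟨v, hp⟩, hp.endsAt, rfl⟩

theorem exists_finset_ev_eq_mul_loop_mul {v : Γ.V} (hv : Γ.HasLoopAt v)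
    (hC : ∀ w, Γ.HasLoopAt w → Γ.MutAcc v w) :
    ∃ B : Finset G, ∀ γ ∈ Γ.Omega0,
      ∃ b₁ ∈ B, ∃ l ∈ Γ.loopSemigroup v, ∃ b₂ ∈ B, Γ.ev γ = b₁ * l * b₂ := by
  have hin : ∀ w, Γ.MutAcc v w → ∃ q, q ≠ [] ∧ Γ.IsWalk v w q := by
    intro w hw
    obtain ⟨ℓ, hℓ, hℓ_walk⟩ := hasLoopAt_iff.1 hv
    obtain ⟨p, hp⟩ := accessible_iff.1 hw.1
    exact ⟨ℓ ++ p, by simp [hℓ], hℓ_walk.append hp⟩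
  have hout : ∀ w, Γ.MutAcc v w → ∃ r, Γ.IsWalk w v r := fun w hw => accessible_iff.1 hw.2
  choose! q hq using hin
  choose! r hr using hout
  set S := {l : List Γ.E | l.length ≤ Fintype.card Γ.V + 1}
  have hS : S.Finite := List.finite_length_le _ _
  set B : Set G := Set.image2 (fun a w => Γ.ev a * (Γ.ev (q w))⁻¹) S univ ∪
    Set.image2 (fun b w => (Γ.ev (r w))⁻¹ * Γ.ev b) S univ
  have hB : B.Finite := (hS.image2 _ finite_univ).union (hS.image2 _ finite_univ)
  refine ⟨hB.toFinset, fun γ hγ => ?_⟩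
  obtain ⟨z, hγ⟩ := isPathFrom_iff_exists_isWalk.1 hγ
  obtain ⟨pre, mid, suf, w₁, w₂, rfl, hpre, hsuf, hw₁, hw₂, hmid⟩ :=
    hγ.exists_eq_append_append (C := {w | Γ.MutAcc v w}) hC ⟨v, mutAcc_equivalence.refl v⟩
  obtain ⟨hq_ne, hq_walk⟩ := hq w₁ hw₁
  have hloop : Γ.IsWalk v v (q w₁ ++ mid ++ r w₂) := (hq_walk.append hmid).append (hr w₂ hw₂)
  refine ⟨Γ.ev pre * (Γ.ev (q w₁))⁻¹, ?_, Γ.ev (q w₁ ++ mid ++ r w₂),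
    ev_mem_loopSemigroup (by simp [hq_ne]) hloop, (Γ.ev (r w₂))⁻¹ * Γ.ev suf, ?_,
    by simp only [ev_append]; group⟩
  · have hpre' : pre ∈ S := Nat.le_succ_of_le hpre
    exact hB.mem_toFinset.2 (Or.inl (Set.mem_image2_of_mem hpre' trivial))
  · exact hB.mem_toFinset.2 (Or.inr (Set.mem_image2_of_mem hsuf trivial))

end Group

end GraphStruct

theorem statement5_general {G : Type*} [Group G]
    (Γ : GraphStruct G) (lam : ℝ)
    (hsurj : Γ.ev '' Γ.Omega0 = Set.univ)
    (hss : Γ.AlmostSemisimple lam)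
    (huniq : ∃ v : Γ.V, Γ.HasLoopAt v ∧ ∀ w : Γ.V, Γ.HasLoopAt w → Γ.MutAcc v w) :
    Γ.Thick lam := by
  intro v hv
  obtain ⟨v₁, -, hv₁⟩ := huniq
  have hloop : Γ.HasLoopAt v := Γ.hasLoopAt_of_maximalVertex (zero_lt_one.trans hss.1).ne' hv
  have hcomp : ∀ w, Γ.HasLoopAt w → Γ.MutAcc v w := fun w hw =>
    GraphStruct.mutAcc_equivalence.trans (GraphStruct.mutAcc_equivalence.symm (hv₁ v hloop))
      (hv₁ w hw)
  obtain ⟨B, hB⟩ := GraphStruct.exists_finset_ev_eq_mul_loop_mul hloop hcomp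
  refine ⟨B, fun g => ?_⟩
  obtain ⟨γ, hγ, rfl⟩ : g ∈ Γ.ev '' Γ.Omega0 := hsurj ▸ Set.mem_univ g
  exact hB γ hγ

theorem statement5 {G : Type*} [Group G] [Countable G]
    (Γ : GraphStruct G) (lam : ℝ)
    (hsurj : Γ.ev '' Γ.Omega0 = Set.univ)
    (hss : Γ.AlmostSemisimple lam)
    (huniq : ∃ v : Γ.V, Γ.HasLoopAt v ∧ ∀ w : Γ.V, Γ.HasLoopAt w → Γ.MutAcc v w) :
    Γ.Thick lam :=
  statement5_general Γ lam hsurj hss huniq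
end

section
/- Let p : [0,∞) → [0,1] be a decreasing function with p(x) → 0 as x → ∞. For each α > 0 and each C > 0 there exists a function p̃ : [0,∞) → [0,∞) such that: (1) p̃(x) ≥ p(x) for all x ≥ 0; (2) p̃(x + mC) ≥ p̃(x)·e^{−αm} for all x ≥ 0 and all natural numbers m; and (3) p̃(x) → 0 as x → ∞. -/
open Filter Set

/-! The envelope `p̃ x = ⨆ m, p (max (x - m * C) 0) * exp (-α m)` does the job.
Multiplying by `exp (-α k)` and reindexing `m ↦ m + k` gives the shift inequality. For `p̃ → 0`,
the terms with `m ≥ M` all lie below `exp (-α M)`, and each of the finitely many others tends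
to `0`. -/

open Topology

theorem tendsto_iSup_nhds_zero_of_le {ι : Type*} {l : Filter ι} {F : ℕ → ι → ℝ} {b : ℕ → ℝ}
    (hF : ∀ m, Tendsto (F m) l (𝓝 0)) (hFb : ∀ m x, F m x ≤ b m)
    (hb : Tendsto b atTop (𝓝 0)) :
    Tendsto (fun x => ⨆ m, F m x) l (𝓝 0) := by
  obtain ⟨B, hB⟩ := hb.bddAbove_range
  have hbdd : ∀ x, BddAbove (range fun m => F m x) := fun x =>
    ⟨B, by rintro _ ⟨m, rfl⟩; exact (hFb m x).trans (hB ⟨m, rfl⟩)⟩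
  refine tendsto_order.2 ⟨fun a ha => ?_, fun a ha => ?_⟩
  · filter_upwards [(tendsto_order.1 (hF 0)).1 a ha] with x hx
    exact hx.trans_le (le_ciSup (hbdd x) 0)
  · obtain ⟨M, hM⟩ := eventually_atTop.1 ((tendsto_order.1 hb).2 (a / 2) (half_pos ha))
    have hhead : ∀ᶠ x in l, ∀ m ∈ Finset.range M, F m x < a / 2 :=
      (Finset.range M).eventually_all.2 fun m _ => (tendsto_order.1 (hF m)).2 _ (half_pos ha)
    filter_upwards [hhead] with x hx
    refine (ciSup_le fun m => ?_).trans_lt (half_lt_self ha)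
    rcases lt_or_ge m M with hm | hm
    · exact (hx m (Finset.mem_range.2 hm)).le
    · exact (hFb m x).trans (hM m hm).le

noncomputable def expEnvelope (p : ℝ → ℝ) (α C x : ℝ) : ℝ :=
  ⨆ m : ℕ, p (max (x - m * C) 0) * Real.exp (-α * m)

section expEnvelope

variable {p : ℝ → ℝ} {α : ℝ} (C : ℝ)

theorem envelope_term_le (hp : ∀ x, 0 ≤ x → p x ≤ 1) (m : ℕ) (x : ℝ) :
    p (max (x - m * C) 0) * Real.exp (-α * m) ≤ Real.exp (-α * m) :=
  mul_le_of_le_one_left (Real.exp_pos _).le (hp _ (le_max_right _ _))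

theorem bddAbove_range_envelope_term (hp : ∀ x, 0 ≤ x → p x ≤ 1) (hα : 0 ≤ α) (x : ℝ) :
    BddAbove (range fun m : ℕ => p (max (x - m * C) 0) * Real.exp (-α * m)) := by
  refine ⟨1, ?_⟩
  rintro _ ⟨m, rfl⟩
  refine (envelope_term_le C hp m x).trans (Real.exp_le_one_iff.2 ?_)
  have : 0 ≤ α * m := by positivity
  linarith

theorem le_expEnvelope (hp : ∀ x, 0 ≤ x → p x ≤ 1) (hα : 0 ≤ α) {x : ℝ} (hx : 0 ≤ x) :
    p x ≤ expEnvelope p α C x := by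
  have h := le_ciSup (bddAbove_range_envelope_term C hp hα x) 0
  simpa [expEnvelope, max_eq_left hx] using h

theorem expEnvelope_mul_exp_le (hp : ∀ x, 0 ≤ x → p x ≤ 1) (hα : 0 ≤ α) (x : ℝ) (m : ℕ) :
    expEnvelope p α C x * Real.exp (-α * m) ≤ expEnvelope p α C (x + m * C) := by
  rw [expEnvelope, Real.iSup_mul_of_nonneg (Real.exp_pos _).le]
  refine ciSup_le fun k => ?_
  have hshift : p (max (x - k * C) 0) * Real.exp (-α * k) * Real.exp (-α * m)
      = p (max (x + m * C - ((k + m : ℕ) : ℝ) * C) 0) * Real.exp (-α * ((k + m : ℕ) : ℝ)) := by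
    rw [mul_assoc, ← Real.exp_add]
    push_cast
    ring_nf
  rw [hshift]
  exact le_ciSup (bddAbove_range_envelope_term C hp hα _) (k + m)

theorem tendsto_expEnvelope (hp : ∀ x, 0 ≤ x → p x ≤ 1) (hlim : Tendsto p atTop (𝓝 0))
    (hα : 0 < α) : Tendsto (expEnvelope p α C) atTop (𝓝 0) := by
  unfold expEnvelope
  refine tendsto_iSup_nhds_zero_of_le (fun m => ?_) (envelope_term_le C hp) ?_
  · have harg : Tendsto (fun x : ℝ => max (x - m * C) 0) atTop atTop :=
      tendsto_atTop_mono (fun x => le_max_left _ _) (tendsto_atTop_add_const_right _ _ tendsto_id)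
    simpa using (hlim.comp harg).mul_const (Real.exp (-α * m))
  · exact Real.tendsto_exp_atBot.comp
      (tendsto_natCast_atTop_atTop.const_mul_atTop_of_neg (neg_lt_zero.2 hα))

end expEnvelope

theorem statement10_general (p : ℝ → ℝ)
    (hp01 : ∀ x : ℝ, 0 ≤ x → p x ∈ Set.Icc (0:ℝ) 1)
    (hlim : Filter.Tendsto p Filter.atTop (nhds 0))
    (α C : ℝ) (hα : 0 < α) :
    ∃ ptilde : ℝ → ℝ,
      (∀ x : ℝ, 0 ≤ x → 0 ≤ ptilde x) ∧
      (∀ x : ℝ, 0 ≤ x → p x ≤ ptilde x) ∧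
      (∀ x : ℝ, 0 ≤ x → ∀ m : ℕ, ptilde x * Real.exp (-α * m) ≤ ptilde (x + m * C)) ∧
      Filter.Tendsto ptilde Filter.atTop (nhds 0) := by
  have hp1 : ∀ x, 0 ≤ x → p x ≤ 1 := fun x hx => (hp01 x hx).2
  refine ⟨expEnvelope p α C, fun x hx => ?_, fun x hx => le_expEnvelope C hp1 hα.le hx,
    fun x _ m => expEnvelope_mul_exp_le C hp1 hα.le x m, tendsto_expEnvelope C hp1 hlim hα⟩
  exact (hp01 x hx).1.trans (le_expEnvelope C hp1 hα.le hx)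

theorem statement10 (p : ℝ → ℝ)
    (hp01 : ∀ x : ℝ, 0 ≤ x → p x ∈ Set.Icc (0:ℝ) 1)
    (hanti : ∀ x y : ℝ, 0 ≤ x → x ≤ y → p y ≤ p x)
    (hlim : Filter.Tendsto p Filter.atTop (nhds 0))
    (α C : ℝ) (hα : 0 < α) (hC : 0 < C) :
    ∃ ptilde : ℝ → ℝ,
      (∀ x : ℝ, 0 ≤ x → 0 ≤ ptilde x) ∧
      (∀ x : ℝ, 0 ≤ x → p x ≤ ptilde x) ∧
      (∀ x : ℝ, 0 ≤ x → ∀ m : ℕ, ptilde x * Real.exp (-α * m) ≤ ptilde (x + m * C)) ∧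
      Filter.Tendsto ptilde Filter.atTop (nhds 0) :=
  statement10_general p hp01 hlim α C hα
end

section
/- For every δ ≥ 0 there exist constants c ≥ 0 and C ≥ 0, depending only on δ, such that for every geodesic δ-hyperbolic metric space X, every isometry g of X, and every x ∈ X with d(x, gx) ≥ 2·(gx, g⁻¹x)ₓ + c, the translation length of g satisfies |τ(g) − (d(x, gx) − 2·(gx, g⁻¹x)ₓ)| ≤ C. -/
open Filter Set

/-!
Write `aₙ = d(gⁿx, x)`, `L = d(x, gx)` and `P = (gx, g⁻¹x)ₓ`. The Gromov products of `gx` and of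
`g⁻¹x` with `gⁿ⁺¹x`, seen from `x`, are `(L + aₙ₊₁ - aₙ)/2` and `(L + aₙ₊₁ - aₙ₊₂)/2`. As long as
the first exceeds `P + δ`, the four-point condition pins the second to within `δ` of `P`, i.e. the
increment `aₙ₊₂ - aₙ₊₁` is within `2δ` of `L - 2P`; when `L > 2P + 2δ` that increment keeps the
first product above `P + δ`, so the estimate propagates along the whole orbit. Summing, `aₙ/n`
stays within `2δ` of `L - 2P` asymptotically.
-/

open Topology

theorem limsup_mem_Icc_of_tendsto {ι : Type*} {F : Filter ι} [F.NeBot] {f l u : ι → ℝ}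
    {α β : ℝ} (hl : Tendsto l F (𝓝 α)) (hu : Tendsto u F (𝓝 β)) (hlf : l ≤ᶠ[F] f)
    (hfu : f ≤ᶠ[F] u) : limsup f F ∈ Icc α β := by
  have hf_le : F.IsBoundedUnder (· ≤ ·) f := hu.isBoundedUnder_le.mono_le hfu
  have hf_ge : F.IsBoundedUnder (· ≥ ·) f := hl.isBoundedUnder_ge.mono_ge hlf
  constructor
  · calc α = limsup l F := hl.limsup_eq.symm
      _ ≤ limsup f F := limsup_le_limsup hlf hl.isBoundedUnder_ge.isCoboundedUnder_le hf_le
  · calc limsup f F ≤ limsup u F := limsup_le_limsup hfu hf_ge.isCoboundedUnder_le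
          hu.isBoundedUnder_le
      _ = β := hu.limsup_eq

theorem abs_sub_mul_le_of_abs_sub_le {a : ℕ → ℝ} {t ε : ℝ} {N : ℕ}
    (h : ∀ n ≥ N, |a (n + 1) - a n - t| ≤ ε) :
    ∀ n ≥ N, |a n - n * t| ≤ n * ε + |a N - N * t| := by
  intro n hn
  induction n, hn using Nat.le_induction with
  | base =>
    have hε : 0 ≤ ε := (abs_nonneg _).trans (h N le_rfl)
    linarith [mul_nonneg (Nat.cast_nonneg N) hε]
  | succ n hNn ih =>
    have hstep := h n hNn
    push_cast
    calc |a (n + 1) - (n + 1) * t| = |(a (n + 1) - a n - t) + (a n - n * t)| := by ring_nf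
      _ ≤ |a (n + 1) - a n - t| + |a n - n * t| := abs_add_le _ _
      _ ≤ (n + 1) * ε + |a N - N * t| := by linarith

theorem abs_limsup_div_sub_le {a : ℕ → ℝ} {t ε : ℝ} (N : ℕ)
    (h : ∀ n ≥ N, |a (n + 1) - a n - t| ≤ ε) :
    |limsup (fun n : ℕ => a n / n) atTop - t| ≤ ε := by
  set K := |a N - N * t|
  have hK : Tendsto (fun n : ℕ => K / n) atTop (𝓝 0) := tendsto_const_div_atTop_nhds_zero_nat K
  have hbounds : ∀ᶠ n : ℕ in atTop, |a n / n - t| ≤ ε + K / n := by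
    filter_upwards [eventually_ge_atTop N, eventually_gt_atTop 0] with n hNn hn
    have hn' : (0 : ℝ) < n := Nat.cast_pos.mpr hn
    rw [show a n / n - t = (a n - n * t) / n by field_simp, abs_div, abs_of_pos hn',
      div_le_iff₀ hn', add_mul, div_mul_cancel₀ _ hn'.ne']
    linarith [abs_sub_mul_le_of_abs_sub_le h n hNn]
  have hmem := limsup_mem_Icc_of_tendsto (f := fun n : ℕ => a n / n)
    (by simpa using (tendsto_const_nhds (x := t - ε)).sub hK)
    (by simpa using (tendsto_const_nhds (x := t + ε)).add hK)
    (hbounds.mono fun n hn => by beta_reduce; linarith [(abs_le.mp hn).1])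
    (hbounds.mono fun n hn => by beta_reduce; linarith [(abs_le.mp hn).2])
  rw [abs_le]
  constructor <;> linarith [hmem.1, hmem.2]

theorem gromovProd_comm {X : Type*} [MetricSpace X] (x y z : X) :
    gromovProd x y z = gromovProd x z y := by
  unfold gromovProd
  rw [dist_comm y z]
  ring

theorem IsDeltaHyperbolic.abs_gromovProd_sub_le {X : Type*} [MetricSpace X] {δ : ℝ}
    (hX : IsDeltaHyperbolic X δ) {x y z w : X}
    (hw : gromovProd x y w + δ < gromovProd x w z) :
    |gromovProd x y z - gromovProd x y w| ≤ δ := by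
  have hδ : 0 ≤ δ := by simpa [gromovProd] using hX x x x x
  have hlow := hX x y z w
  have hup := hX x y w z
  rw [gromovProd_comm x z w] at hup
  rw [min_eq_left (by linarith)] at hlow
  rcases min_choice (gromovProd x y z) (gromovProd x w z) with hm | hm <;> rw [hm] at hup
  · rw [abs_le]; constructor <;> linarith
  · linarith

namespace IsometryEquiv

variable {X : Type*} [MetricSpace X] (g : X ≃ᵢ X) (x : X)

theorem dist_symm_apply_right : dist x (g.symm x) = dist x (g x) := by
  rw [← g.dist_eq, g.apply_symm_apply, dist_comm]

theorem gromovProd_apply_iterate_succ (n : ℕ) :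
    gromovProd x (g x) ((⇑g)^[n + 1] x) =
      (dist x (g x) + dist ((⇑g)^[n + 1] x) x - dist ((⇑g)^[n] x) x) / 2 := by
  unfold gromovProd
  rw [Function.iterate_succ_apply', g.dist_eq, dist_comm x (g ((⇑g)^[n] x)),
    dist_comm x ((⇑g)^[n] x)]

theorem gromovProd_symm_apply_iterate_succ (n : ℕ) :
    gromovProd x (g.symm x) ((⇑g)^[n + 1] x) =
      (dist x (g x) + dist ((⇑g)^[n + 1] x) x - dist ((⇑g)^[n + 2] x) x) / 2 := by
  unfold gromovProd
  rw [dist_symm_apply_right, ← g.dist_eq (g.symm x), g.apply_symm_apply,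
    ← Function.iterate_succ_apply' g (n + 1), dist_comm x ((⇑g)^[n + 1] x),
    dist_comm x ((⇑g)^[n + 1 + 1] x)]

theorem abs_dist_iterate_succ_sub_le {δ : ℝ} (hX : IsDeltaHyperbolic X δ)
    (hx : 2 * gromovProd x (g x) (g.symm x) + 2 * δ < dist x (g x)) (n : ℕ) :
    |dist ((⇑g)^[n + 2] x) x - dist ((⇑g)^[n + 1] x) x -
        (dist x (g x) - 2 * gromovProd x (g x) (g.symm x))| ≤ 2 * δ := by
  set L := dist x (g x)
  set P := gromovProd x (g x) (g.symm x)
  set a : ℕ → ℝ := fun n => dist ((⇑g)^[n] x) x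
  have hP : gromovProd x (g.symm x) (g x) = P := gromovProd_comm _ _ _
  have step : ∀ n, P + δ < gromovProd x (g x) ((⇑g)^[n + 1] x) →
      |a (n + 2) - a (n + 1) - (L - 2 * P)| ≤ 2 * δ := by
    intro n hn
    rw [← hP] at hn
    have := hX.abs_gromovProd_sub_le hn
    rw [gromovProd_symm_apply_iterate_succ, hP, abs_le] at this
    rw [abs_le]
    constructor <;> linarith [this.1, this.2]
  have far : ∀ n, P + δ < gromovProd x (g x) ((⇑g)^[n + 1] x) := by
    intro n
    rw [gromovProd_apply_iterate_succ]
    induction n with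
    | zero => simp only [zero_add, Function.iterate_one, Function.iterate_zero, id_eq, dist_self,
        dist_comm (g x) x]; linarith [dist_nonneg (x := x) (y := g x)]
    | succ n ih => linarith [(abs_le.mp (step n (by rwa [gromovProd_apply_iterate_succ]))).1]
  exact step n (far n)

end IsometryEquiv

theorem statement14 (δ : ℝ) (hδ : 0 ≤ δ) :
    ∃ c ≥ (0:ℝ), ∃ C ≥ (0:ℝ),
      ∀ (X : Type) [inst : MetricSpace X], IsGeodesicSpace X → IsDeltaHyperbolic X δ →
        ∀ (g : X ≃ᵢ X) (x : X),
          2 * gromovProd x (g x) (g.symm x) + c ≤ dist x (g x) →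
          |Filter.limsup (fun n : ℕ => dist ((⇑g)^[n] x) x / n) Filter.atTop -
              (dist x (g x) - 2 * gromovProd x (g x) (g.symm x))| ≤ C := by
  refine ⟨2 * δ + 1, by linarith, 2 * δ, by linarith, ?_⟩
  intro X _ _ hX g x hx
  refine abs_limsup_div_sub_le 1 fun n hn => ?_
  obtain ⟨m, rfl⟩ := Nat.exists_eq_add_of_le' hn
  exact g.abs_dist_iterate_succ_sub_le x hX (by linarith) m
end
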